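/- Fix R₁ > 0. There exists a unique q ∈ C([0,∞)) ∩ C^∞((0,∞)) solving q'' + (1/s + 3s/(R₁(1 + s²/(2R₁)))) q' − q/s² = −12s/(1 + s²/(2R₁))³ on (0,∞) with q(0) = 0 and q(s) → 0 as s → ∞. Moreover q(s) = 48R₁³/(5s³) + rem(s) and q'(s) = −144R₁³/(5s⁴) + rem(s)/s, where |rem(s)| ≤ K/s⁴ for all s > 1, with K depending only on R₁. -/

import Mathlib

open Set Filter

noncomputable def qfun (R₁ : ℝ) : ℝ → ℝ := fun s => 48*R₁^3/5 * s / (2*R₁+s^2)^2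
noncomputable def qfun1 (R₁ : ℝ) : ℝ → ℝ := fun s => 48*R₁^3/5 * (2*R₁-3*s^2) / (2*R₁+s^2)^3
noncomputable def qfun2 (R₁ : ℝ) : ℝ → ℝ := fun s => 48*R₁^3/5 * (12*s*(s^2-2*R₁)) / (2*R₁+s^2)^4

lemma den_pos {R₁ : ℝ} (hR₁ : 0 < R₁) (s : ℝ) : 0 < 2*R₁+s^2 := by positivity

lemma hasDeriv_qfun {R₁ : ℝ} (hR₁ : 0 < R₁) (s : ℝ) :
    HasDerivAt (qfun R₁) (qfun1 R₁ s) s := by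
  have hd := (den_pos hR₁ s).ne'
  have h1 : HasDerivAt (fun s : ℝ => 48*R₁^3/5 * s) (48*R₁^3/5) s :=
    (hasDerivAt_id s).const_mul _ |>.congr_deriv (by ring)
  have h2 : HasDerivAt (fun s : ℝ => (2*R₁+s^2)^2) (2*(2*R₁+s^2)*(2*s)) s := by
    have : HasDerivAt (fun s : ℝ => 2*R₁+s^2) (2*s) s := by
      simpa using ((hasDerivAt_pow 2 s).const_add (2*R₁))
    exact (this.pow 2).congr_deriv (by norm_num)
  have := h1.div h2 (pow_ne_zero 2 hd)
  refine this.congr_deriv ?_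
  unfold qfun1
  field_simp
  ring

lemma hasDeriv_qfun1 {R₁ : ℝ} (hR₁ : 0 < R₁) (s : ℝ) :
    HasDerivAt (qfun1 R₁) (qfun2 R₁ s) s := by
  have hd := (den_pos hR₁ s).ne'
  have h1 : HasDerivAt (fun s : ℝ => 48*R₁^3/5 * (2*R₁-3*s^2)) (48*R₁^3/5 * (-(3*(2*s)))) s := by
    have : HasDerivAt (fun s : ℝ => 2*R₁-3*s^2) (-(3*(2*s))) s := by
      simpa using (((hasDerivAt_pow 2 s).const_mul 3).const_sub (2*R₁))
    exact this.const_mul _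
  have h2 : HasDerivAt (fun s : ℝ => (2*R₁+s^2)^3) (3*(2*R₁+s^2)^2*(2*s)) s := by
    have : HasDerivAt (fun s : ℝ => 2*R₁+s^2) (2*s) s := by
      simpa using ((hasDerivAt_pow 2 s).const_add (2*R₁))
    exact this.pow 3
  have := h1.div h2 (pow_ne_zero 3 hd)
  refine this.congr_deriv ?_
  unfold qfun2
  field_simp
  ring

lemma deriv_qfun {R₁ : ℝ} (hR₁ : 0 < R₁) : deriv (qfun R₁) = qfun1 R₁ :=
  funext fun s => (hasDeriv_qfun hR₁ s).deriv

lemma deriv_qfun1 {R₁ : ℝ} (hR₁ : 0 < R₁) : deriv (qfun1 R₁) = qfun2 R₁ :=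
  funext fun s => (hasDeriv_qfun1 hR₁ s).deriv

lemma qfun_ode {R₁ : ℝ} (hR₁ : 0 < R₁) {s : ℝ} (hs : 0 < s) :
    qfun2 R₁ s + (1 / s + 3 * s / (R₁ * (1 + s ^ 2 / (2 * R₁)))) * qfun1 R₁ s
      - qfun R₁ s / s ^ 2 = -(12 * s) / (1 + s ^ 2 / (2 * R₁)) ^ 3 := by
  have hd := (den_pos hR₁ s).ne'
  have h2 : (1 + s ^ 2 / (2 * R₁)) ≠ 0 := by
    have : (1 : ℝ) + s^2/(2*R₁) > 0 := by positivity
    exact this.ne'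
  unfold qfun qfun1 qfun2
  field_simp
  ring

lemma qfun_contDiff {R₁ : ℝ} (hR₁ : 0 < R₁) : ContDiff ℝ (⊤ : ℕ∞) (qfun R₁) := by
  apply ContDiff.div
  · exact contDiff_const.mul contDiff_id
  · exact (contDiff_const.add (contDiff_id.pow 2)).pow 2
  · exact fun s => pow_ne_zero 2 (den_pos hR₁ s).ne'

lemma qfun_tendsto {R₁ : ℝ} (hR₁ : 0 < R₁) : Tendsto (qfun R₁) atTop (nhds 0) := by
  have h1 : Tendsto (fun s : ℝ => (2*R₁+s^2)^2 / s) atTop atTop := by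
    apply tendsto_atTop_mono' atTop (show ∀ᶠ s : ℝ in atTop, s^3 ≤ (2*R₁+s^2)^2/s from ?_)
      (tendsto_pow_atTop (by norm_num))
    filter_upwards [eventually_ge_atTop 1] with s hs
    rw [le_div_iff₀ (by linarith)]
    nlinarith [sq_nonneg s, sq_nonneg R₁, mul_pos hR₁ (show (0:ℝ) < s by linarith)]
  have h2 : Tendsto (fun s : ℝ => 48*R₁^3/5 / ((2*R₁+s^2)^2 / s)) atTop (nhds 0) :=
    Tendsto.div_atTop tendsto_const_nhds h1
  apply h2.congr'
  filter_upwards [eventually_gt_atTop 0] with s hs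
  unfold qfun
  rw [div_div_eq_mul_div]

lemma qfun_bound1 {R₁ : ℝ} (hR₁ : 0 < R₁) {s : ℝ} (hs : 1 < s) :
    |qfun R₁ s - 48 * R₁ ^ 3 / (5 * s ^ 3)| ≤ (1152*(R₁^4+R₁^5+R₁^6)) / s ^ 4 := by
  have hs0 : (0:ℝ) < s := by linarith
  have hd := den_pos hR₁ s
  have heq : qfun R₁ s - 48 * R₁ ^ 3 / (5 * s ^ 3)
      = -(192*R₁^4/5*(s^2+R₁) / (s^3*(2*R₁+s^2)^2)) := by
    unfold qfun; field_simp; ring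
  rw [heq, abs_neg, abs_of_nonneg (by positivity)]
  rw [div_le_div_iff₀ (by positivity) (by positivity)]
  have hsq : (s^2)^2 ≤ (2*R₁+s^2)^2 := pow_le_pow_left₀ (sq_nonneg s) (by linarith) 2
  have hA : s^7 ≤ s^3*(2*R₁+s^2)^2 := by nlinarith [pow_pos hs0 3]
  have hB : 1152*(R₁^4+R₁^5+R₁^6)*s^7 ≤ 1152*(R₁^4+R₁^5+R₁^6)*(s^3*(2*R₁+s^2)^2) :=
    mul_le_mul_of_nonneg_left hA (by positivity)
  have hC : R₁^4*s^6 ≤ R₁^4*s^7 :=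
    mul_le_mul_of_nonneg_left (pow_le_pow_right₀ hs.le (by norm_num)) (by positivity)
  have hD : R₁^5*s^4 ≤ R₁^5*s^7 :=
    mul_le_mul_of_nonneg_left (pow_le_pow_right₀ hs.le (by norm_num)) (by positivity)
  have hE : (0:ℝ) ≤ R₁^6*s^7 := by positivity
  linarith [hB, hC, hD, hE, mul_pos (pow_pos hR₁ 4) (pow_pos hs0 7), mul_pos (pow_pos hR₁ 5) (pow_pos hs0 7), mul_pos (pow_pos hR₁ 6) (pow_pos hs0 7)]

lemma qfun_bound2 {R₁ : ℝ} (hR₁ : 0 < R₁) {s : ℝ} (hs : 1 < s) :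
    |qfun1 R₁ s + 144 * R₁ ^ 3 / (5 * s ^ 4)| ≤ (1152*(R₁^4+R₁^5+R₁^6)) / s ^ 5 := by
  have hs0 : (0:ℝ) < s := by linarith
  have hd := den_pos hR₁ s
  have heq : qfun1 R₁ s + 144 * R₁ ^ 3 / (5 * s ^ 4)
      = 48*R₁^3/5*(20*R₁*s^4+36*R₁^2*s^2+24*R₁^3) / (s^4*(2*R₁+s^2)^3) := by
    unfold qfun1; field_simp; ring
  rw [heq, abs_of_nonneg (by positivity)]
  rw [div_le_div_iff₀ (by positivity) (by positivity)]
  have hcube : (s^2)^3 ≤ (2*R₁+s^2)^3 := pow_le_pow_left₀ (sq_nonneg s) (by linarith) 3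
  have hA : s^10 ≤ s^4*(2*R₁+s^2)^3 := by nlinarith [pow_pos hs0 4]
  have hB : 1152*(R₁^4+R₁^5+R₁^6)*s^10 ≤ 1152*(R₁^4+R₁^5+R₁^6)*(s^4*(2*R₁+s^2)^3) :=
    mul_le_mul_of_nonneg_left hA (by positivity)
  have hC : R₁^4*s^9 ≤ R₁^4*s^10 :=
    mul_le_mul_of_nonneg_left (pow_le_pow_right₀ hs.le (by norm_num)) (by positivity)
  have hD : R₁^5*s^7 ≤ R₁^5*s^10 :=
    mul_le_mul_of_nonneg_left (pow_le_pow_right₀ hs.le (by norm_num)) (by positivity)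
  have hE : R₁^6*s^5 ≤ R₁^6*s^10 :=
    mul_le_mul_of_nonneg_left (pow_le_pow_right₀ hs.le (by norm_num)) (by positivity)
  linarith [hB, hC, hD, hE, mul_pos (pow_pos hR₁ 4) (pow_pos hs0 10),
    mul_pos (pow_pos hR₁ 5) (pow_pos hs0 10), mul_pos (pow_pos hR₁ 6) (pow_pos hs0 10)]

/-- Maximum principle: a solution of the homogeneous equation with zero boundary
data is nonpositive. -/
lemma ode_nonpos (P d : ℝ → ℝ)
    (hc : ContinuousOn d (Set.Ici 0))
    (hd : ContDiffOn ℝ (⊤ : ℕ∞) d (Set.Ioi 0))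
    (hode : ∀ s ∈ Set.Ioi (0:ℝ), deriv (deriv d) s + P s * deriv d s - d s / s ^ 2 = 0)
    (h0 : d 0 = 0) (hlim : Filter.Tendsto d Filter.atTop (nhds 0)) :
    ∀ s ∈ Set.Ici (0:ℝ), d s ≤ 0 := by
  by_contra h
  push_neg at h
  obtain ⟨s₁, hs₁, hpos⟩ := h
  obtain ⟨N, hN⟩ := (hlim.eventually (eventually_lt_nhds hpos)).exists_forall_of_atTop
  set N' := max N (s₁ + 1) with hN'def
  have hs₁N' : s₁ ≤ N' := le_trans (by linarith) (le_max_right _ _)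
  have hN'pos : 0 < N' :=
    lt_of_lt_of_le (by have := Set.mem_Ici.mp hs₁; linarith : (0:ℝ) < s₁ + 1) (le_max_right _ _)
  obtain ⟨s₀, hs₀mem, hmax⟩ := (isCompact_Icc (a := (0:ℝ)) (b := N')).exists_isMaxOn
    ⟨0, by constructor <;> [rfl; exact hN'pos.le]⟩
    (hc.mono (fun x hx => hx.1))
  have hs₁mem : s₁ ∈ Set.Icc (0:ℝ) N' := ⟨hs₁, hs₁N'⟩
  have hds₀ : 0 < d s₀ := lt_of_lt_of_le hpos (hmax hs₁mem)
  have hs₀pos : 0 < s₀ := by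
    rcases hs₀mem.1.lt_or_eq with h | h
    · exact h
    · exfalso; rw [← h, h0] at hds₀; exact lt_irrefl 0 hds₀
  have hs₀lt : s₀ < N' := by
    rcases hs₀mem.2.lt_or_eq with h | h
    · exact h
    · exfalso
      have := hN s₀ (h ▸ le_max_left _ _)
      have h2 : d s₁ ≤ d s₀ := hmax hs₁mem
      linarith [h2]
  have hloc : IsLocalMax d s₀ := by
    filter_upwards [isOpen_Ioo.mem_nhds (show s₀ ∈ Set.Ioo 0 N' from ⟨hs₀pos, hs₀lt⟩)] with x hx
    exact hmax ⟨hx.1.le, hx.2.le⟩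
  have hopen : Set.Ioi (0:ℝ) ∈ nhds s₀ := isOpen_Ioi.mem_nhds hs₀pos
  have hd' : ContDiffOn ℝ (⊤ : ℕ∞) (deriv d) (Set.Ioi 0) := hd.deriv_of_isOpen isOpen_Ioi (by simp)
  have hdiff2 : DifferentiableAt ℝ (deriv d) s₀ :=
    (hd'.differentiableOn (by simp)).differentiableAt hopen
  have hder0 : deriv d s₀ = 0 := hloc.deriv_eq_zero
  have hLpos : 0 < deriv (deriv d) s₀ := by
    have h1 := hode s₀ hs₀pos
    have h2 : 0 < d s₀ / s₀ ^ 2 := div_pos hds₀ (pow_pos hs₀pos 2)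
    rw [hder0] at h1
    nlinarith
  have hslope := hasDerivAt_iff_tendsto_slope.mp hdiff2.hasDerivAt
  have hev2 : ∀ᶠ x in nhdsWithin s₀ (Set.Ioi s₀), 0 < deriv d x ∧ d x ≤ d s₀ := by
    have h1 : ∀ᶠ x in nhdsWithin s₀ {s₀}ᶜ, 0 < slope (deriv d) s₀ x :=
      hslope.eventually (eventually_gt_nhds hLpos)
    have h2 : ∀ᶠ x in nhdsWithin s₀ (Set.Ioi s₀), 0 < slope (deriv d) s₀ x :=
      h1.filter_mono (nhdsWithin_mono _ (fun x hx => ne_of_gt hx))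
    have h3 : ∀ᶠ x in nhdsWithin s₀ (Set.Ioi s₀), d x ≤ d s₀ :=
      hloc.filter_mono nhdsWithin_le_nhds
    filter_upwards [h2, h3, self_mem_nhdsWithin] with x hx hx3 hmem
    refine ⟨?_, hx3⟩
    rw [slope_def_field] at hx
    rw [hder0, sub_zero] at hx
    have hxs : (0:ℝ) < x - s₀ := sub_pos.mpr hmem
    rcases div_pos_iff.mp hx with ⟨h, _⟩ | ⟨_, h⟩
    · exact h
    · linarith
  obtain ⟨u, hu, hsub⟩ := mem_nhdsGT_iff_exists_Ioo_subset.mp hev2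
  set w := (s₀ + u) / 2 with hwdef
  have huu : s₀ < u := hu
  have hw : w ∈ Set.Ioo s₀ u := ⟨by simp only [hwdef]; linarith, by simp only [hwdef]; linarith⟩
  have hmono : StrictMonoOn d (Set.Icc s₀ w) := by
    apply strictMonoOn_of_deriv_pos (convex_Icc _ _)
    · exact (hd.continuousOn).mono (fun x hx => lt_of_lt_of_le hs₀pos hx.1)
    · intro x hx
      rw [interior_Icc] at hx
      exact (hsub ⟨hx.1, lt_trans hx.2 hw.2⟩).1
  have hlt : d s₀ < d w :=
    hmono ⟨le_refl _, hw.1.le⟩ ⟨hw.1.le, le_refl _⟩ hw.1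
  have hle : d w ≤ d s₀ := (hsub hw).2
  linarith

/-- The difference of two solutions solves the homogeneous equation. -/
lemma diff_ode (P F : ℝ → ℝ) {f g : ℝ → ℝ}
    (hf : ContDiffOn ℝ (⊤ : ℕ∞) f (Set.Ioi 0)) (hg : ContDiffOn ℝ (⊤ : ℕ∞) g (Set.Ioi 0))
    (hfe : ∀ s ∈ Set.Ioi (0:ℝ), deriv (deriv f) s + P s * deriv f s - f s / s ^ 2 = F s)
    (hge : ∀ s ∈ Set.Ioi (0:ℝ), deriv (deriv g) s + P s * deriv g s - g s / s ^ 2 = F s) :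
    ∀ s ∈ Set.Ioi (0:ℝ),
      deriv (deriv (fun x => f x - g x)) s + P s * deriv (fun x => f x - g x) s
        - (fun x => f x - g x) s / s ^ 2 = 0 := by
  intro s hs
  have hop : Set.Ioi (0:ℝ) ∈ nhds s := isOpen_Ioi.mem_nhds hs
  have hdf : ∀ x ∈ Set.Ioi (0:ℝ), DifferentiableAt ℝ f x := fun x hx =>
    (hf.differentiableOn (by simp)).differentiableAt (isOpen_Ioi.mem_nhds hx)
  have hdg : ∀ x ∈ Set.Ioi (0:ℝ), DifferentiableAt ℝ g x := fun x hx =>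
    (hg.differentiableOn (by simp)).differentiableAt (isOpen_Ioi.mem_nhds hx)
  have h1 : deriv (fun x => f x - g x) =ᶠ[nhds s] fun x => deriv f x - deriv g x := by
    filter_upwards [hop] with x hx
    exact deriv_sub (hdf x hx) (hdg x hx)
  have hdf' : DifferentiableAt ℝ (deriv f) s :=
    ((hf.deriv_of_isOpen isOpen_Ioi (by simp)).differentiableOn (by simp : ((⊤ : ℕ∞) : WithTop ℕ∞) ≠ 0)).differentiableAt hop
  have hdg' : DifferentiableAt ℝ (deriv g) s :=
    ((hg.deriv_of_isOpen isOpen_Ioi (by simp)).differentiableOn (by simp : ((⊤ : ℕ∞) : WithTop ℕ∞) ≠ 0)).differentiableAt hop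
  have h2 : deriv (deriv (fun x => f x - g x)) s = deriv (deriv f) s - deriv (deriv g) s := by
    rw [h1.deriv_eq]
    exact deriv_sub hdf' hdg'
  have h3 : deriv (fun x => f x - g x) s = deriv f s - deriv g s :=
    deriv_sub (hdf s hs) (hdg s hs)
  have e1 := hfe s hs
  have e2 := hge s hs
  have hP : P s * (deriv f s - deriv g s) = P s * deriv f s - P s * deriv g s := by ring
  simp only [h2, h3]
  rw [hP, sub_div]
  linarith

/-- existence, uniqueness and asymptotics for the mode-1 lubrication
profile ODE q'' + (1/s + 3s/(R₁(1+s²/(2R₁))))q' - q/s² = -12s/(1+s²/(2R₁))³ with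
q(0) = 0 and q(s) → 0 at infinity; moreover q(s) = 48R₁³/(5s³) + O(s⁻⁴) and
q'(s) = -144R₁³/(5s⁴) + O(s⁻⁵). -/
theorem profile_ode_existence_uniqueness_asymptotics (R₁ : ℝ) (hR₁ : 0 < R₁) :
    ∃ q : ℝ → ℝ,
      (ContinuousOn q (Set.Ici 0) ∧ ContDiffOn ℝ (⊤ : ℕ∞) q (Set.Ioi 0) ∧
        (∀ s ∈ Set.Ioi (0:ℝ),
          deriv (deriv q) s
            + (1 / s + 3 * s / (R₁ * (1 + s ^ 2 / (2 * R₁)))) * deriv q s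
            - q s / s ^ 2
          = -(12 * s) / (1 + s ^ 2 / (2 * R₁)) ^ 3) ∧
        q 0 = 0 ∧ Filter.Tendsto q Filter.atTop (nhds 0)) ∧
      (∀ q' : ℝ → ℝ,
        (ContinuousOn q' (Set.Ici 0) ∧ ContDiffOn ℝ (⊤ : ℕ∞) q' (Set.Ioi 0) ∧
          (∀ s ∈ Set.Ioi (0:ℝ),
            deriv (deriv q') s
              + (1 / s + 3 * s / (R₁ * (1 + s ^ 2 / (2 * R₁)))) * deriv q' s
              - q' s / s ^ 2
            = -(12 * s) / (1 + s ^ 2 / (2 * R₁)) ^ 3) ∧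
          q' 0 = 0 ∧ Filter.Tendsto q' Filter.atTop (nhds 0)) →
        Set.EqOn q' q (Set.Ici 0)) ∧
      (∃ K : ℝ, ∀ s : ℝ, 1 < s →
        |q s - 48 * R₁ ^ 3 / (5 * s ^ 3)| ≤ K / s ^ 4 ∧
        |deriv q s + 144 * R₁ ^ 3 / (5 * s ^ 4)| ≤ K / s ^ 5) := by
  have hcd := qfun_contDiff hR₁
  have hq0 : qfun R₁ 0 = 0 := by unfold qfun; norm_num
  have hode : ∀ s ∈ Set.Ioi (0:ℝ),
      deriv (deriv (qfun R₁)) s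
        + (1 / s + 3 * s / (R₁ * (1 + s ^ 2 / (2 * R₁)))) * deriv (qfun R₁) s
        - qfun R₁ s / s ^ 2
      = -(12 * s) / (1 + s ^ 2 / (2 * R₁)) ^ 3 := by
    intro s hs
    rw [deriv_qfun hR₁, deriv_qfun1 hR₁]
    exact qfun_ode hR₁ hs
  refine ⟨qfun R₁, ⟨hcd.continuous.continuousOn, hcd.contDiffOn, hode, hq0, qfun_tendsto hR₁⟩,
    ?_, ⟨1152*(R₁^4+R₁^5+R₁^6), fun s hs => ⟨qfun_bound1 hR₁ hs, ?_⟩⟩⟩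
  · rintro q' ⟨hc', hd', hode', h0', hlim'⟩ s hs
    set P : ℝ → ℝ := fun s => 1 / s + 3 * s / (R₁ * (1 + s ^ 2 / (2 * R₁))) with hP
    set F : ℝ → ℝ := fun s => -(12 * s) / (1 + s ^ 2 / (2 * R₁)) ^ 3 with hF
    have h1 : ∀ x ∈ Set.Ici (0:ℝ), q' x - qfun R₁ x ≤ 0 := by
      apply ode_nonpos P _ (hc'.sub hcd.continuous.continuousOn) (hd'.sub hcd.contDiffOn)
        (diff_ode P F hd' hcd.contDiffOn hode' hode)
      · rw [Pi.sub_apply, h0', hq0]; ring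
      · simpa [Pi.sub_def] using hlim'.sub (qfun_tendsto hR₁)
    have h2 : ∀ x ∈ Set.Ici (0:ℝ), qfun R₁ x - q' x ≤ 0 := by
      apply ode_nonpos P _ (hcd.continuous.continuousOn.sub hc') (hcd.contDiffOn.sub hd')
        (diff_ode P F hcd.contDiffOn hd' hode hode')
      · rw [Pi.sub_apply, h0', hq0]; ring
      · simpa [Pi.sub_def] using (qfun_tendsto hR₁).sub hlim'
    have := h1 s hs
    have := h2 s hs
    linarith
  · rw [deriv_qfun hR₁]
    exact qfun_bound2 hR₁ hs
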